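/- arXiv:1606.08275 — 6 statements merged into one kernel-verified Lean document; each statement's English description precedes it below -/
import Mathlib

section
/- Let w be a string of length n and let a, b, d_A, d_B be positions with a < d_A and b < d_B. Suppose the factors w[a, d_A−1] and w[b, d_B−1] have the same string period (i.e., there exists a string p such that each of these factors is a prefix of a sufficiently long repetition of p), but neither w[a, d_A] nor w[b, d_B] has that string period. Then LCE(a,b) = min(d_A − a, d_B − b) if d_A − a ≠ d_B − b, and LCE(a,b) = (d_A − a) + LCE(d_A, d_B) otherwise. -/
/-- Length of the longest common prefix of two lists. -/
def lcp {α : Type*} [DecidableEq α] : List α → List α → ℕ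
  | a :: u, b :: v => if a = b then lcp u v + 1 else 0
  | _, _ => 0

/-- `LCE w i j` is the length of the longest common prefix of the suffixes of `w`
starting at (0-based) positions `i` and `j`. -/
def LCE {α : Type*} [DecidableEq α] (w : List α) (i j : ℕ) : ℕ :=
  lcp (w.drop i) (w.drop j)

/-- `u` has string period `p` (a string): `u` is a prefix of a sufficiently long
repetition of `p`. -/
def HasStringPeriod {α : Type*} (u p : List α) : Prop :=
  p ≠ [] ∧ p.length ≤ u.length ∧ ∀ k < u.length, u[k]? = p[k % p.length]?

theorem lcp_append_same {α : Type*} [DecidableEq α] (x u v : List α) :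
    lcp (x ++ u) (x ++ v) = x.length + lcp u v := by
  induction x with
  | nil => simp
  | cons a x ih => simp [lcp, ih]; omega

theorem lcp_le {α : Type*} [DecidableEq α] :
    ∀ (u v : List α) (m : ℕ), u[m]? ≠ v[m]? → lcp u v ≤ m
  | [], v, m, h => by simp [lcp]
  | a :: u, [], m, h => by simp [lcp]
  | a :: u, b :: v, 0, h => by
    simp only [List.getElem?_cons_zero, ne_eq, Option.some.injEq] at h
    simp [lcp, h]
  | a :: u, b :: v, m + 1, h => by
    by_cases hab : a = b
    · simp only [lcp, hab, if_true]
      have := lcp_le u v m (by simpa using h)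
      omega
    · simp [lcp, hab]

theorem le_lcp {α : Type*} [DecidableEq α] :
    ∀ (u v : List α) (m : ℕ), m ≤ u.length → (∀ k < m, u[k]? = v[k]?) → m ≤ lcp u v
  | _, _, 0, _, _ => Nat.zero_le _
  | [], v, m + 1, hm, h => by simp at hm
  | a :: u, v, m + 1, hm, h => by
    have h0 := h 0 (Nat.succ_pos _)
    match v with
    | [] => simp at h0
    | b :: v =>
      simp only [List.getElem?_cons_zero, Option.some.injEq] at h0
      simp only [lcp, h0, if_true]
      have := le_lcp u v m (by simpa using hm)
        (fun k hk => by simpa using h (k + 1) (by omega))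
      omega

theorem lcp_eq_of {α : Type*} [DecidableEq α] (u v : List α) (m : ℕ)
    (hm : m ≤ u.length) (h : ∀ k < m, u[k]? = v[k]?) (hne : u[m]? ≠ v[m]?) :
    lcp u v = m :=
  le_antisymm (lcp_le u v m hne) (le_lcp u v m hm h)

theorem lce_of_string_periods {α : Type*} [DecidableEq α] (w : List α)
    (a b dA dB : ℕ) (ha : a < dA) (hb : b < dB)
    (hdA : dA < w.length) (hdB : dB < w.length) (p : List α)
    (h1 : HasStringPeriod ((w.drop a).take (dA - a)) p)
    (h2 : HasStringPeriod ((w.drop b).take (dB - b)) p)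
    (h3 : ¬ HasStringPeriod ((w.drop a).take (dA - a + 1)) p)
    (h4 : ¬ HasStringPeriod ((w.drop b).take (dB - b + 1)) p) :
    (dA - a ≠ dB - b → LCE w a b = min (dA - a) (dB - b)) ∧
    (dA - a = dB - b → LCE w a b = (dA - a) + LCE w dA dB) := by
  set LA := dA - a with hLAdef
  set LB := dB - b with hLBdef
  have hlenA : ((w.drop a).take LA).length = LA := by
    simp [List.length_take, List.length_drop]; omega
  have hlenB : ((w.drop b).take LB).length = LB := by
    simp [List.length_take, List.length_drop]; omega
  have hlenA' : ((w.drop a).take (LA + 1)).length = LA + 1 := by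
    simp [List.length_take, List.length_drop]; omega
  have hlenB' : ((w.drop b).take (LB + 1)).length = LB + 1 := by
    simp [List.length_take, List.length_drop]; omega
  obtain ⟨hp, hpA, hFA⟩ := h1
  obtain ⟨-, hpB, hFB⟩ := h2
  rw [hlenA] at hpA hFA
  rw [hlenB] at hpB hFB
  -- elementwise facts
  have FA : ∀ k < LA, w[a + k]? = p[k % p.length]? := by
    intro k hk
    have := hFA k hk
    rwa [List.getElem?_take, if_pos hk, List.getElem?_drop] at this
  have FB : ∀ k < LB, w[b + k]? = p[k % p.length]? := by
    intro k hk
    have := hFB k hk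
    rwa [List.getElem?_take, if_pos hk, List.getElem?_drop] at this
  -- mismatch facts
  have GA : w[dA]? ≠ p[LA % p.length]? := by
    intro hcontra
    apply h3
    refine ⟨hp, ?_, ?_⟩
    · rw [hlenA']; omega
    · rw [hlenA']
      intro k hk
      rw [List.getElem?_take, if_pos hk, List.getElem?_drop]
      rcases Nat.lt_or_ge k LA with h | h
      · exact FA k h
      · have : k = LA := by omega
        subst this
        have : a + LA = dA := by omega
        rw [this, hcontra]
  have GB : w[dB]? ≠ p[LB % p.length]? := by
    intro hcontra
    apply h4
    refine ⟨hp, ?_, ?_⟩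
    · rw [hlenB']; omega
    · rw [hlenB']
      intro k hk
      rw [List.getElem?_take, if_pos hk, List.getElem?_drop]
      rcases Nat.lt_or_ge k LB with h | h
      · exact FB k h
      · have : k = LB := by omega
        subst this
        have : b + LB = dB := by omega
        rw [this, hcontra]
  have hdAa : a + LA = dA := by omega
  have hdBb : b + LB = dB := by omega
  constructor
  · -- unequal case
    intro hne
    rcases Nat.lt_or_ge LA LB with hlt | hge
    · rw [min_eq_left (le_of_lt hlt)]
      apply lcp_eq_of
      · rw [List.length_drop]; omega
      · intro k hk
        rw [List.getElem?_drop, List.getElem?_drop, FA k hk, FB k (by omega)]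
      · rw [List.getElem?_drop, List.getElem?_drop, hdAa, FB LA hlt]
        exact GA
    · have hlt : LB < LA := by omega
      rw [min_eq_right (le_of_lt hlt)]
      apply lcp_eq_of
      · rw [List.length_drop]; omega
      · intro k hk
        rw [List.getElem?_drop, List.getElem?_drop, FA k (by omega), FB k hk]
      · rw [List.getElem?_drop, List.getElem?_drop, hdBb, FA LB hlt]
        exact fun h => GB h.symm
  · -- equal case
    intro heq
    have hxy : (w.drop a).take LA = (w.drop b).take LB := by
      apply List.ext_getElem?
      intro k
      rcases Nat.lt_or_ge k LA with hk | hk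
      · rw [List.getElem?_take, if_pos hk, List.getElem?_drop,
          List.getElem?_take, if_pos (heq ▸ hk), List.getElem?_drop,
          FA k hk, FB k (heq ▸ hk)]
      · rw [List.getElem?_eq_none (by omega), List.getElem?_eq_none (by rw [hlenB]; omega)]
    have hsplitA : w.drop a = (w.drop a).take LA ++ w.drop dA := by
      conv_lhs => rw [← List.take_append_drop LA (w.drop a)]
      rw [List.drop_drop, hdAa]
    have hsplitB : w.drop b = (w.drop a).take LA ++ w.drop dB := by
      conv_lhs => rw [← List.take_append_drop LB (w.drop b)]
      rw [List.drop_drop, hdBb, hxy]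
    show lcp (w.drop a) (w.drop b) = LA + LCE w dA dB
    rw [hsplitA, hsplitB, lcp_append_same, hlenA]
    rfl
end

section
/- Let w be a string, let i ≥ 0, and consider two pairs (a,b) and (a',b') with a ≤ b, a' ≤ b', ⌈a/2^i⌉ = ⌈a'/2^i⌉, ⌈b/2^i⌉ = ⌈b'/2^i⌉, LCE(a,b) ≥ 3·2^i, and LCE(a',b') ≥ 3·2^i. Let p = |(b−b') − (a−a')|. If p ≠ 0 and b' ≤ b, then LCE(a, a+p) ≥ 2^{i+1}; equivalently, p is a period of the factor w[a, a+2^{i+1}+p−1]. -/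
/-- A positive integer `p` is a period of `u` if `u[k] = u[k+p]` whenever both
indices are in range. -/
def HasPeriod {α : Type*} (u : List α) (p : ℕ) : Prop :=
  0 < p ∧ ∀ k, k + p < u.length → u[k]? = u[k + p]?

/-! Similar positions lie in the same block of length `2^i`, so each end of the query `(a', b')`
is less than `2^i` away from the corresponding end of `(a, b)`. If `a + p = a' + (b - b')`, moving
`(a', b')` by `b - b'` gives a match of `(a + p, b)`; otherwise `b + p = b' + (a - a')`, and moving
`(a', b')` by `a - a'` and `(a, b)` by `p` gives matches of `(a, b + p)` and `(a + p, b + p)`.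
Each move costs less than `2^i` of the `3·2^i` matched characters, and chaining the two matches
through their common right end leaves `LCE(a, a + p) ≥ 2^(i+1)`. -/

section lcp

variable {α : Type*} [DecidableEq α]

theorem getElem?_eq_of_lt_lcp :
    ∀ {u v : List α} {k : ℕ}, k < lcp u v → u[k]? = v[k]?
  | a :: u, b :: v, k, hk => by
    by_cases hab : a = b
    · rw [lcp, if_pos hab] at hk
      cases k with
      | zero => simp [hab]
      | succ k => simpa using getElem?_eq_of_lt_lcp (u := u) (v := v) (by omega)
    · simp [lcp, hab] at hk
  | [], _, _, hk | _ :: _, [], _, hk => by simp [lcp] at hk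

theorem lcp_sub_le_lcp_drop :
    ∀ (u v : List α) (s : ℕ), lcp u v - s ≤ lcp (u.drop s) (v.drop s)
  | a :: u, b :: v, s + 1 => by
    by_cases hab : a = b
    · simpa [lcp, hab] using lcp_sub_le_lcp_drop u v s
    · simp [lcp, hab]
  | _, _, 0 => by simp
  | [], _, _ + 1 | _ :: _, [], _ + 1 => by simp [lcp]

theorem min_lcp_le_lcp :
    ∀ u v w : List α, min (lcp u w) (lcp v w) ≤ lcp u v
  | a :: u, b :: v, c :: w => by
    have ih := min_lcp_le_lcp u v w
    simp only [lcp]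
    split_ifs <;> grind
  | [], _, _ | _ :: _, [], _ | _ :: _, _ :: _, [] => by simp [lcp]

end lcp

section LCE

variable {α : Type*} [DecidableEq α] (w : List α)

theorem LCE_sub_le_LCE_add_add (i j s : ℕ) : LCE w i j - s ≤ LCE w (i + s) (j + s) := by
  simpa [LCE, List.drop_drop, Nat.add_comm s] using lcp_sub_le_lcp_drop (w.drop i) (w.drop j) s

theorem min_LCE_le_LCE (i j k : ℕ) : min (LCE w i k) (LCE w j k) ≤ LCE w i j :=
  min_lcp_le_lcp _ _ _

theorem hasPeriod_take_drop_of_le_LCE {a p L : ℕ} (hp : 0 < p) (hL : L ≤ LCE w a (a + p)) :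
    HasPeriod ((w.drop a).take (L + p)) p := by
  refine ⟨hp, fun k hk => ?_⟩
  have hkL : k < L := by simp only [List.length_take] at hk; omega
  have hmatch := getElem?_eq_of_lt_lcp (Nat.lt_of_lt_of_le hkL hL)
  simp only [List.getElem?_drop] at hmatch
  rw [List.getElem?_take_of_lt (by omega), List.getElem?_take_of_lt (by omega),
    List.getElem?_drop, List.getElem?_drop, hmatch, Nat.add_right_comm, Nat.add_assoc]

end LCE

theorem Nat.lt_add_of_div_eq_div {x y n : ℕ} (hn : 0 < n) (h : x / n = y / n) : x < y + n := by
  have hx := Nat.lt_div_mul_add (a := x) hn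
  have hy := Nat.div_mul_le_self y n
  rw [h] at hx
  omega

/-- Positions are 0-based, so similarity `⌈a/2^i⌉ = ⌈a'/2^i⌉` of 1-based positions becomes
`a / 2^i = a' / 2^i`. -/
theorem similar_relevant_period_general {α : Type*} [DecidableEq α] (w : List α)
    (i a b a' b' p : ℕ)
    (hA : a / 2 ^ i = a' / 2 ^ i) (hB : b / 2 ^ i = b' / 2 ^ i)
    (h1 : LCE w a b ≥ 3 * 2 ^ i) (h2 : LCE w a' b' ≥ 3 * 2 ^ i)
    (hp : (p : ℤ) = |((b : ℤ) - b') - ((a : ℤ) - a')|)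
    (hp0 : p ≠ 0) (hbb : b' ≤ b) :
    LCE w a (a + p) ≥ 2 ^ (i + 1) ∧
      HasPeriod ((w.drop a).take (2 ^ (i + 1) + p)) p := by
  have hpos : 0 < 2 ^ i := Nat.two_pow_pos i
  have hpow : 2 ^ (i + 1) = 2 * 2 ^ i := by ring
  have hb : b < b' + 2 ^ i := Nat.lt_add_of_div_eq_div hpos hB
  have hLCE : 2 ^ (i + 1) ≤ LCE w a (a + p) := by
    rcases le_total (a + b') (b + a') with hc | hc
    · rw [abs_of_nonneg (by omega)] at hp
      have hshift := LCE_sub_le_LCE_add_add w a' b' (b - b')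
      rw [show a' + (b - b') = a + p by omega, show b' + (b - b') = b by omega] at hshift
      have hchain := min_LCE_le_LCE w a (a + p) b
      omega
    · rw [abs_of_nonpos (by omega)] at hp
      have ha : a < a' + 2 ^ i := Nat.lt_add_of_div_eq_div hpos hA
      have hshift := LCE_sub_le_LCE_add_add w a' b' (a - a')
      rw [show a' + (a - a') = a by omega, show b' + (a - a') = b + p by omega] at hshift
      have hshift' := LCE_sub_le_LCE_add_add w a b p
      have hchain := min_LCE_le_LCE w a (a + p) (b + p)
      omega
  exact ⟨hLCE, hasPeriod_take_drop_of_le_LCE w (Nat.pos_of_ne_zero hp0) hLCE⟩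

/-- Two similar relevant level-`i` queries with `p ≠ 0` and `b' ≤ b` force
`LCE(a, a+p) ≥ 2^(i+1)`, i.e. `p` is a period of `w[a, a+2^(i+1)+p-1]`.
Positions are 0-based, so similarity `⌈a/2^i⌉ = ⌈a'/2^i⌉` (1-based) becomes
`a / 2^i = a' / 2^i`. -/
theorem similar_relevant_period {α : Type*} [DecidableEq α] (w : List α)
    (i a b a' b' p : ℕ) (hab : a ≤ b) (hab' : a' ≤ b')
    (hA : a / 2 ^ i = a' / 2 ^ i) (hB : b / 2 ^ i = b' / 2 ^ i)
    (h1 : LCE w a b ≥ 3 * 2 ^ i) (h2 : LCE w a' b' ≥ 3 * 2 ^ i)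
    (hp : (p : ℤ) = |((b : ℤ) - b') - ((a : ℤ) - a')|)
    (hp0 : p ≠ 0) (hbb : b' ≤ b) :
    LCE w a (a + p) ≥ 2 ^ (i + 1) ∧
      HasPeriod ((w.drop a).take (2 ^ (i + 1) + p)) p :=
  similar_relevant_period_general w i a b a' b' p hA hB h1 h2 hp hp0 hbb
end

section
/- (Case q > 0 of the similarity lemma.) Let w be a string and suppose LCE(a,b) ≥ 3·2^i, LCE(a',b') ≥ 3·2^i, with q = (b−b') − (a−a') > 0 and b − b' ≤ 2^i. Then LCE(a, a+q) ≥ 3·2^i − (b−b') ≥ 2^{i+1}. -/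
lemma lcp_comm {α : Type*} [DecidableEq α] : ∀ u v : List α, lcp u v = lcp v u
  | a :: u, b :: v => by
    simp only [lcp]
    by_cases h : a = b
    · subst h; simp [lcp_comm u v]
    · simp [h, Ne.symm h]
  | [], b :: v => by simp [lcp]
  | a :: u, [] => by simp [lcp]
  | [], [] => rfl

lemma lcp_triangle {α : Type*} [DecidableEq α] :
    ∀ u v t : List α, min (lcp u v) (lcp v t) ≤ lcp u t
  | a :: u, b :: v, c :: t => by
    simp only [lcp]
    by_cases hab : a = b
    · by_cases hbc : b = c
      · have hac : a = c := hab.trans hbc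
        simp only [hab, hbc, hac, if_true]
        have := lcp_triangle u v t
        omega
      · simp [hbc]
    · simp [hab]
  | [], v, t => by simp [lcp]
  | a :: u, [], t => by simp [lcp]
  | a :: u, b :: v, [] => by simp [lcp]

lemma lcp_drop {α : Type*} [DecidableEq α] :
    ∀ (d : ℕ) (u v : List α), lcp u v - d ≤ lcp (u.drop d) (v.drop d)
  | 0, u, v => by simp
  | d + 1, a :: u, b :: v => by
    simp only [List.drop_succ_cons, lcp]
    by_cases h : a = b
    · simp only [h, if_true]
      have := lcp_drop d u v
      omega
    · simp [h]
  | d + 1, [], v => by simp [lcp]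
  | d + 1, a :: u, [] => by simp [lcp]

lemma LCE_shift {α : Type*} [DecidableEq α] (w : List α) (i j d : ℕ) :
    LCE w i j - d ≤ LCE w (i + d) (j + d) := by
  unfold LCE
  rw [← List.drop_drop, ← List.drop_drop]
  exact lcp_drop d (w.drop i) (w.drop j)

/-- Case `q > 0` of the similarity lemma: if `LCE(a,b) ≥ 3·2^i`,
`LCE(a',b') ≥ 3·2^i`, `q = (b-b') - (a-a') > 0` and `b - b' ≤ 2^i`, then
`LCE(a, a+q) ≥ 3·2^i - (b-b') ≥ 2^(i+1)`. -/
theorem similar_case_q_pos {α : Type*} [DecidableEq α] (w : List α)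
    (i a b a' b' q : ℕ)
    (hq : (q : ℤ) = ((b : ℤ) - b') - ((a : ℤ) - a')) (hqpos : 0 < q)
    (hb'b : b' ≤ b) (hbb : b - b' ≤ 2 ^ i)
    (h1 : LCE w a b ≥ 3 * 2 ^ i) (h2 : LCE w a' b' ≥ 3 * 2 ^ i) :
    LCE w a (a + q) ≥ 3 * 2 ^ i - (b - b') ∧
      3 * 2 ^ i - (b - b') ≥ 2 ^ (i + 1) := by
  set d := b - b' with hd
  have haq : a + q = a' + d := by omega
  have hshift : LCE w a' b' - d ≤ LCE w (a' + d) (b' + d) := LCE_shift w a' b' d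
  have hbd : b' + d = b := by omega
  rw [hbd] at hshift
  -- triangle: LCE w a (a'+d) ≥ min (LCE w a b) (LCE w b (a'+d))
  have htri : min (lcp (w.drop a) (w.drop b)) (lcp (w.drop b) (w.drop (a' + d)))
      ≤ lcp (w.drop a) (w.drop (a' + d)) := lcp_triangle _ _ _
  have hsym : LCE w (a' + d) b = LCE w b (a' + d) := lcp_comm (w.drop (a' + d)) (w.drop b)
  have hmain : LCE w a (a + q) ≥ 3 * 2 ^ i - d := by
    rw [haq]
    have : min (LCE w a b) (LCE w b (a' + d)) ≤ LCE w a (a' + d) := htri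
    rw [← hsym] at this
    have h2' : 3 * 2 ^ i - d ≤ LCE w (a' + d) b := by omega
    omega
  refine ⟨hmain, ?_⟩
  have : (2:ℕ) ^ (i + 1) = 2 * 2 ^ i := by ring
  omega
end

section
/- Let w be a word over a linearly ordered alphabet such that w is a Lyndon word (w is lexicographically strictly smaller than each of its nonempty proper suffixes). If w = uv where v is the longest proper nonempty suffix of w that is itself a Lyndon word, then u is also a Lyndon word. -/
/-!
Suppose `u = ab` with `a, b` nonempty and `b ≤ u`; then `b < u`, and `w < bv` since `bv` is a
proper suffix of `w`. If `b` is not a prefix of `u`, then `b < u` already forces `bv < uv = w`.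
Otherwise `u = bc` and `bcv < bv` gives `cv < v`. But `v` is the least proper nonempty suffix
of `w`: the least nonempty suffix of any word is a Lyndon word, so the least nonempty suffix of a
proper suffix `x` of `w` is a Lyndon suffix of `w`, hence a suffix of `v` by maximality of `v`,
hence `≥ v`.
-/

/-- A word is a Lyndon word if it is nonempty and lexicographically strictly
smaller than all of its nonempty proper suffixes. -/
def IsLyndon {α : Type*} [LinearOrder α] (w : List α) : Prop :=
  w ≠ [] ∧ ∀ u v : List α, w = u ++ v → u ≠ [] → v ≠ [] → w < v

namespace List

theorem append_lt_append_of_lt_of_not_isPrefix {α : Type*} [LT α] :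
    ∀ {b u : List α}, b < u → ¬ b <+: u → ∀ s t : List α, b ++ s < u ++ t
  | [], _, _, hpre, _, _ => absurd nil_prefix hpre
  | _ :: _, [], h, _, _, _ => absurd h (not_lt_nil _)
  | a :: b, c :: u, h, hpre, s, t => by
    rcases cons_lt_cons_iff.mp h with hac | ⟨rfl, hbu⟩
    · exact cons_lt_cons_iff.mpr (Or.inl hac)
    · have hpre' : ¬ b <+: u := fun h => hpre (cons_prefix_cons.mpr ⟨rfl, h⟩)
      exact cons_lt_cons_iff.mpr
        (Or.inr ⟨rfl, append_lt_append_of_lt_of_not_isPrefix hbu hpre' s t⟩)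

theorem lt_of_append_lt_append_left {α : Type*} [LinearOrder α] {s t t' : List α}
    (h : s ++ t < s ++ t') : t < t' :=
  (StrictMono.lt_iff_lt (fun _ _ => append_left_lt (l₁ := s))).mp h

end List

section Lyndon

variable {α : Type*} [LinearOrder α]

theorem IsLyndon.le_of_isSuffix {v z : List α} (hv : IsLyndon v) (hz : z <:+ v) (hz0 : z ≠ []) :
    v ≤ z := by
  obtain ⟨p, rfl⟩ := hz
  rcases eq_or_ne p [] with rfl | hp
  · exact le_rfl
  · exact (hv.2 p z rfl hp hz0).le

theorem isLyndon_of_forall_le {s : List α} (hs : s ≠ [])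
    (h : ∀ x t : List α, s = x ++ t → x ≠ [] → t ≠ [] → s ≤ t) : IsLyndon s := by
  refine ⟨hs, fun x t hxt hx ht => (h x t hxt hx ht).lt_of_ne ?_⟩
  rintro rfl
  exact hx (List.self_eq_append_left.mp hxt)

/-- The least nonempty suffix of a nonempty word is a Lyndon word. -/
theorem exists_isLyndon_isSuffix_le {x : List α} (hx : x ≠ []) :
    ∃ s, s <:+ x ∧ IsLyndon s ∧ s ≤ x := by
  let S := x.tails.toFinset.filter (· ≠ [])
  have mem_S : ∀ {t}, t ∈ S ↔ t <:+ x ∧ t ≠ [] := by simp [S, List.mem_tails]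
  obtain ⟨s, hsS, hmin⟩ := S.exists_min_image id ⟨x, mem_S.mpr ⟨List.suffix_refl x, hx⟩⟩
  obtain ⟨hsx, hs⟩ := mem_S.mp hsS
  refine ⟨s, hsx, isLyndon_of_forall_le hs fun y t hyt _ ht => hmin t (mem_S.mpr ⟨?_, ht⟩),
    hmin x (mem_S.mpr ⟨List.suffix_refl x, hx⟩)⟩
  exact (List.suffix_append y t).trans (hyt ▸ hsx)

theorem le_of_isSuffix_of_longest_isLyndon_suffix {w v x : List α} (hvL : IsLyndon v)
    (hvw : v <:+ w)
    (hlongest : ∀ v' : List α, v' <:+ w → v' ≠ [] → v' ≠ w → IsLyndon v' →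
      v'.length ≤ v.length)
    (hxw : x <:+ w) (hx : x ≠ []) (hxw' : x ≠ w) : v ≤ x := by
  obtain ⟨s, hsx, hsL, hsle⟩ := exists_isLyndon_isSuffix_le hx
  have hsw : s ≠ w := by
    rintro rfl
    exact hxw' (hxw.eq_of_length (le_antisymm hxw.length_le hsx.length_le))
  have hsv : s <:+ v :=
    List.suffix_of_suffix_length_le (hsx.trans hxw) hvw (hlongest s (hsx.trans hxw) hsL.1 hsw hsL)
  exact (hvL.le_of_isSuffix hsv hsL.1).trans hsle

end Lyndon

theorem std_fact_left_lyndon_general {α : Type*} [LinearOrder α] (w u v : List α)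
    (hw : IsLyndon w) (hsplit : w = u ++ v) (hu : u ≠ [])
    (hvL : IsLyndon v)
    (hlongest : ∀ v' : List α, v' <:+ w → v' ≠ [] → v' ≠ w → IsLyndon v' →
      v'.length ≤ v.length) :
    IsLyndon u := by
  refine ⟨hu, fun a b hab ha hb => ?_⟩
  by_contra hbu
  have hlen : b.length < u.length := by
    simpa [hab] using List.length_pos_iff.mpr ha
  have hb_lt : b < u := (le_of_not_gt hbu).lt_of_ne (by rintro rfl; omega)
  have hw_lt : u ++ v < b ++ v :=
    hsplit ▸ hw.2 a (b ++ v) (by simp [hsplit, hab]) ha (by simp [hb])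
  by_cases hpre : b <+: u
  · obtain ⟨c, rfl⟩ := hpre
    have hc : c ≠ [] := by rintro rfl; simp at hlen
    have hcv : c ++ v < v := List.lt_of_append_lt_append_left (by simpa using hw_lt)
    have hvc : v ≤ c ++ v :=
      le_of_isSuffix_of_longest_isLyndon_suffix hvL ⟨b ++ c, hsplit.symm⟩ hlongest
        ⟨b, by simp [hsplit]⟩ (by simp [hc]) (by simp [hsplit, hb])
    exact hcv.not_ge hvc
  · exact hw_lt.not_gt (List.append_lt_append_of_lt_of_not_isPrefix hb_lt hpre v v)

/-- In the standard factorization `w = uv` of a Lyndon word `w` (with `v` the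
longest proper nonempty Lyndon suffix), the word `u` is also a Lyndon word. -/
theorem std_fact_left_lyndon {α : Type*} [LinearOrder α] (w u v : List α)
    (hw : IsLyndon w) (hsplit : w = u ++ v) (hu : u ≠ []) (hv : v ≠ [])
    (hvL : IsLyndon v)
    (hlongest : ∀ v' : List α, v' <:+ w → v' ≠ [] → v' ≠ w → IsLyndon v' →
      v'.length ≤ v.length) :
    IsLyndon u :=
  std_fact_left_lyndon_general w u v hw hsplit hu hvL hlongest
end

section
/- For any sequence S_0 ⊇-relation defined by S_{i+1} ⊆ S_i ∪ {(a,b) : a < b ≤ a + 2^{i+1}}, if ⌈S_0/1⌉ = S_0 is non-crossing, then ⌈S_i/2^i⌉ is non-crossing for every i ≥ 0. -/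
def Crossing (p q : ℤ × ℤ) : Prop :=
  (p.1 < q.1 ∧ q.1 < p.2 ∧ p.2 < q.2) ∨ (q.1 < p.1 ∧ p.1 < q.2 ∧ q.2 < p.2)

def cdiv (a t : ℤ) : ℤ := ⌈(a : ℚ) / (t : ℚ)⌉

lemma cdiv_le_iff {t : ℤ} (ht : 0 < t) (a m : ℤ) : cdiv a t ≤ m ↔ a ≤ m * t := by
  unfold cdiv
  rw [Int.ceil_le, div_le_iff₀ (by exact_mod_cast ht)]
  exact_mod_cast Iff.rfl

lemma cdiv_one (a : ℤ) : cdiv a 1 = a := by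
  simp [cdiv]

lemma cdiv_mono {t : ℤ} (ht : 0 < t) {a b : ℤ} (h : a ≤ b) : cdiv a t ≤ cdiv b t := by
  rw [cdiv_le_iff ht]
  exact le_trans h ((cdiv_le_iff ht b (cdiv b t)).1 le_rfl)

lemma lt_of_cdiv_lt {t : ℤ} (ht : 0 < t) {a b : ℤ} (h : cdiv a t < cdiv b t) : a < b := by
  by_contra hab
  exact absurd (cdiv_mono ht (le_of_not_gt hab)) (not_le_of_gt h)

lemma cdiv_cdiv {s t : ℤ} (hs : 0 < s) (ht : 0 < t) (a : ℤ) :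
    cdiv (cdiv a s) t = cdiv a (s * t) := by
  have key : ∀ m, cdiv (cdiv a s) t ≤ m ↔ cdiv a (s * t) ≤ m := by
    intro m
    rw [cdiv_le_iff ht, cdiv_le_iff hs, cdiv_le_iff (mul_pos hs ht)]
    constructor <;> intro h <;> nlinarith
  exact le_antisymm ((key _).2 le_rfl) ((key _).1 le_rfl)

lemma cdiv_add_self {t : ℤ} (ht : 0 < t) (a : ℤ) : cdiv (a + t) t = cdiv a t + 1 := by
  have key : ∀ m, cdiv (a + t) t ≤ m ↔ cdiv a t + 1 ≤ m := by
    intro m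
    rw [cdiv_le_iff ht]
    constructor <;> intro h
    · have : a ≤ (m - 1) * t := by nlinarith
      have := (cdiv_le_iff ht a (m - 1)).2 this
      omega
    · have : cdiv a t ≤ m - 1 := by omega
      have := (cdiv_le_iff ht a (m - 1)).1 this
      nlinarith
  exact le_antisymm ((key _).2 le_rfl) ((key _).1 le_rfl)

lemma not_crossing_short {A B C D : ℤ} (h : B ≤ A + 1) :
    ¬ Crossing (C, D) (A, B) ∧ ¬ Crossing (A, B) (C, D) := by
  constructor <;> (intro hc; rcases hc with ⟨h1, h2, h3⟩ | ⟨h1, h2, h3⟩ <;> simp_all <;> omega)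

/-- If `S₀` is non-crossing and `S_{i+1} ⊆ S_i ∪ {(a,b) : a < b ≤ a + 2^{i+1}}`,
then `⌈S_i / 2^i⌉` is non-crossing for every `i ≥ 0`. -/
theorem levels_noncrossing (n : ℤ) (hn : 0 < n) (S : ℕ → Set (ℤ × ℤ))
    (hP : ∀ i, ∀ p ∈ S i, 1 ≤ p.1 ∧ p.1 ≤ p.2 ∧ p.2 ≤ n)
    (hsub : ∀ i, S (i + 1) ⊆ S i ∪ {p | p.1 < p.2 ∧ p.2 ≤ p.1 + 2 ^ (i + 1)})
    (h0 : ∀ p ∈ S 0, ∀ q ∈ S 0, ¬ Crossing p q) :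
    ∀ i, ∀ p ∈ S i, ∀ q ∈ S i,
      ¬ Crossing (cdiv p.1 (2 ^ i), cdiv p.2 (2 ^ i))
                 (cdiv q.1 (2 ^ i), cdiv q.2 (2 ^ i)) := by
  intro i
  induction i with
  | zero =>
    intro p hp q hq
    simpa [cdiv_one] using h0 p hp q hq
  | succ i ih =>
    have h2i : (0 : ℤ) < 2 ^ i := by positivity
    have h2i1 : (0 : ℤ) < 2 ^ (i + 1) := by positivity
    have hcomp : ∀ x : ℤ, cdiv x (2 ^ (i + 1)) = cdiv (cdiv x (2 ^ i)) 2 := by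
      intro x
      rw [cdiv_cdiv h2i (by norm_num), ← pow_succ]
    have hshort : ∀ x y : ℤ, y ≤ x + 2 ^ (i + 1) →
        cdiv y (2 ^ (i + 1)) ≤ cdiv x (2 ^ (i + 1)) + 1 := by
      intro x y hxy
      calc cdiv y (2 ^ (i + 1)) ≤ cdiv (x + 2 ^ (i + 1)) (2 ^ (i + 1)) := cdiv_mono h2i1 hxy
        _ = cdiv x (2 ^ (i + 1)) + 1 := cdiv_add_self h2i1 x
    intro p hp q hq
    rcases hsub i hp with hp' | hp'
    · rcases hsub i hq with hq' | hq'
      · intro hc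
        apply ih p hp' q hq'
        rcases hc with ⟨h1, h2, h3⟩ | ⟨h1, h2, h3⟩ <;>
          simp only [hcomp] at h1 h2 h3
        · exact Or.inl ⟨lt_of_cdiv_lt (by norm_num) h1,
            lt_of_cdiv_lt (by norm_num) h2, lt_of_cdiv_lt (by norm_num) h3⟩
        · exact Or.inr ⟨lt_of_cdiv_lt (by norm_num) h1,
            lt_of_cdiv_lt (by norm_num) h2, lt_of_cdiv_lt (by norm_num) h3⟩
      · exact (not_crossing_short (hshort q.1 q.2 hq'.2)).1
    · exact (not_crossing_short (hshort p.1 p.2 hp'.2)).2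
end

section
/- If [a,b] is a run in a string w with shortest period p, then 2p ≤ b − a + 1 and for every run [a',b'] in w with the same shortest period p, if the intervals [a,b] and [a',b'] overlap in at least p positions then [a,b] = [a',b']. -/
/-- `[a,b]` (0-based, inclusive) is a run in `w` with shortest period `p`:
`p` is the shortest period of `w[a,b]`, it repeats at least twice, and the
periodicity extends neither to the left nor to the right. -/
def IsRun {α : Type*} (w : List α) (a b p : ℕ) : Prop :=
  a < b ∧ b < w.length ∧
  HasPeriod ((w.drop a).take (b - a + 1)) p ∧
  (∀ q, 0 < q → HasPeriod ((w.drop a).take (b - a + 1)) q → p ≤ q) ∧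
  2 * p ≤ b - a + 1 ∧
  (0 < a → ¬ HasPeriod ((w.drop (a - 1)).take (b - a + 2)) p) ∧
  (b + 1 < w.length → ¬ HasPeriod ((w.drop a).take (b - a + 2)) p)

private lemma slice_get {α : Type*} (w : List α) (c n k : ℕ) (hk : k < n) :
    ((w.drop c).take n)[k]? = w[c + k]? := by
  rw [List.getElem?_take, if_pos hk, List.getElem?_drop]

private lemma hasPeriod_iff {α : Type*} (w : List α) (c n p : ℕ) (hp : 0 < p)
    (hn : c + n ≤ w.length) :
    HasPeriod ((w.drop c).take n) p ↔
      ∀ i, c ≤ i → i + p < c + n → w[i]? = w[i + p]? := by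
  have hlen : ((w.drop c).take n).length = n := by
    simp [List.length_take, List.length_drop]; omega
  constructor
  · rintro ⟨-, h⟩ i hi hip
    have := h (i - c) (by omega)
    rw [slice_get _ _ _ _ (by omega), slice_get _ _ _ _ (by omega)] at this
    have e1 : c + (i - c) = i := by omega
    have e2 : c + (i - c + p) = i + p := by omega
    rwa [e1, e2] at this
  · intro h
    refine ⟨hp, fun k hk => ?_⟩
    rw [hlen] at hk
    rw [slice_get _ _ _ _ (by omega), slice_get _ _ _ _ (by omega)]
    have := h (c + k) (by omega) (by omega)
    rwa [show c + k + p = c + (k + p) by omega] at this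

/-- two overlapping `p`-periodic segments merge into a `p`-periodic segment -/
private lemma union_period {α : Type*} (w : List α) (a b a' b' p : ℕ)
    (h1 : ∀ i, a ≤ i → i + p ≤ b → w[i]? = w[i + p]?)
    (h2 : ∀ i, a' ≤ i → i + p ≤ b' → w[i]? = w[i + p]?)
    (hov : a' + p ≤ min b b' + 1) :
    ∀ i, a ≤ i → i + p ≤ max b b' → w[i]? = w[i + p]? := by
  intro i hi hip
  by_cases hc : i + p ≤ b
  · exact h1 i hi hc
  · exact h2 i (by omega) (by omega)

private lemma runs_key {α : Type*} (w : List α) (a b a' b' p : ℕ)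
    (h : IsRun w a b p) (h' : IsRun w a' b' p) (haa' : a ≤ a')
    (hov : a' + p ≤ min b b' + 1) : a = a' ∧ b = b' := by
  obtain ⟨hab, hbL, hper, -, -, -, hrext⟩ := h
  obtain ⟨hab', hbL', hper', -, -, hlext', hrext'⟩ := h'
  have hp : 0 < p := hper.1
  have P1 : ∀ i, a ≤ i → i + p ≤ b → w[i]? = w[i + p]? := by
    have := (hasPeriod_iff w a (b - a + 1) p hp (by omega)).mp hper
    intro i hi hip; exact this i hi (by omega)
  have P2 : ∀ i, a' ≤ i → i + p ≤ b' → w[i]? = w[i + p]? := by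
    have := (hasPeriod_iff w a' (b' - a' + 1) p hp (by omega)).mp hper'
    intro i hi hip; exact this i hi (by omega)
  have U := union_period w a b a' b' p P1 P2 hov
  have hae : a = a' := by
    by_contra hne
    have ha' : 0 < a' := by omega
    refine hlext' ha' ((hasPeriod_iff w (a' - 1) (b' - a' + 2) p hp (by omega)).mpr ?_)
    intro i hi hip
    exact U i (by omega) (by omega)
  refine ⟨hae, ?_⟩
  by_contra hbne
  rcases lt_or_gt_of_ne hbne with hlt | hgt
  · refine hrext (by omega) ((hasPeriod_iff w a (b - a + 2) p hp (by omega)).mpr ?_)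
    intro i hi hip
    exact U i hi (by omega)
  · refine hrext' (by omega) ((hasPeriod_iff w a' (b' - a' + 2) p hp (by omega)).mpr ?_)
    intro i hi hip
    exact U i (by omega) (by omega)

/-- A run satisfies `2p ≤ b - a + 1`, and two runs with the same shortest
period `p` overlapping in at least `p` positions coincide. -/
theorem runs_with_same_period {α : Type*} (w : List α) (a b p : ℕ)
    (h : IsRun w a b p) :
    2 * p ≤ b - a + 1 ∧
    ∀ a' b', IsRun w a' b' p →
      p ≤ ((Finset.Icc a b) ∩ (Finset.Icc a' b')).card →
      a = a' ∧ b = b' := by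
  refine ⟨h.2.2.2.2.1, fun a' b' h' hcard => ?_⟩
  have hp : 0 < p := h.2.2.1.1
  have hicc : (Finset.Icc a b ∩ Finset.Icc a' b') = Finset.Icc (max a a') (min b b') := by
    ext x; simp only [Finset.mem_inter, Finset.mem_Icc]; omega
  rw [hicc, Nat.card_Icc] at hcard
  have hov : max a a' + p ≤ min b b' + 1 := by omega
  rcases le_total a a' with hle | hle
  · exact runs_key w a b a' b' p h h' hle (by omega)
  · have := runs_key w a' b' a b p h' h hle (by omega)
    exact ⟨this.1.symm, this.2.symm⟩
end
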